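/- arXiv:2505.02264 — 2 statements merged into one kernel-verified Lean document; each statement's English description precedes it below -/
import Mathlib

section
/- Let C be a category with pullbacks, and (U, (U_i, ι_i)_{i∈I}) a sink in C. Suppose F : P₂(I)ᵒᵖ ⥤ C is a functor with F({i}) = U_i for all i, and suppose there is a colimit cocone over F with apex U whose component at each singleton {i} is ι_i. Then the multicofork with apex U and legs ι_i over the multispan indexed by I², whose left objects are the pullbacks U_i ×_U U_j for (i,j) ∈ I², whose right objects are the U_i, and whose structure maps are the two pullback projections pr₁ : U_i ×_U U_j ⟶ U_i and pr₂ : U_i ×_U U_j ⟶ U_j, is also a colimit (i.e., U is the multicoequalizer of this multispan). -/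
/-!
Given a multicofork `E` with legs `π_i : U_i ⟶ E` equalizing the two projections of every
`U_i ×_U U_j`, two maps `F(S) ⟶ F({i})` and `F(S) ⟶ F({j})` for `i, j ∈ S` agree after `ι`
(both give the cocone component at `S`), so they factor through `U_i ×_U U_j` and hence agree
after `π`. Restricting to any singleton therefore turns `E` into a cocone over `F`, and the
universal property of `U` as a colimit of `F` gives the factorisation through `U`.
-/

open CategoryTheory CategoryTheory.Limits Opposite

universe w v u

/-- The defining property of objects of the truncated power set category of order `2`:
nonempty subsets with at most two elements. -/
def P2Prop (I : Type w) : Set I → Prop :=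
  fun S => S.Nonempty ∧ ∃ a b : I, S ⊆ ({a, b} : Set I)

/-- The truncated power set category of `I` of order `2`. -/
abbrev P2 (I : Type w) := CategoryTheory.ObjectProperty.FullSubcategory (P2Prop I)

namespace P2

variable {I : Type w}

/-- The singleton `{i}` as an object of `P2 I`. -/
def single (i : I) : P2 I :=
  ⟨{i}, Set.singleton_nonempty i, i, i, by simp⟩

/-- The pair `{i, j}` as an object of `P2 I`. -/
def pair (i j : I) : P2 I :=
  ⟨{i, j}, ⟨i, by simp⟩, i, j, le_refl _⟩

end P2

/-- The multispan associated with a sink `(ι_i : U_i ⟶ U)`: left objects are the pullbacks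
`U_i ×_U U_j` for `(i,j) ∈ I²`, right objects are the `U_i`, and the structure maps are the
two pullback projections. -/
noncomputable def sinkMultispan {C : Type u} [Category.{v} C] [HasPullbacks C] {I : Type w}
    {U : C} (X : I → C) (ι : ∀ i, X i ⟶ U) : MultispanIndex (MultispanShape.prod I) C where
  left p := pullback (ι p.1) (ι p.2)
  right i := X i
  fst p := pullback.fst (ι p.1) (ι p.2)
  snd p := pullback.snd (ι p.1) (ι p.2)

namespace P2

variable {I : Type w}

instance (S T : P2 I) : Subsingleton (S ⟶ T) :=
  ⟨fun _ _ => InducedCategory.hom_ext (Subsingleton.elim _ _)⟩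

def singleHom (S : P2 I) {i : I} (hi : i ∈ S.obj) : single i ⟶ S :=
  ObjectProperty.homMk (homOfLE (Set.singleton_subset_iff.mpr hi))

noncomputable def elem (S : P2 I) : I :=
  S.property.1.some

theorem elem_mem (S : P2 I) : S.elem ∈ S.obj :=
  S.property.1.some_mem

end P2

section SinkMultispan

variable {C : Type u} [Category.{v} C] [HasPullbacks C] {I : Type w}

theorem sinkMultispan_comp_π_eq {X : I → C} {U : C} {ι : ∀ i, X i ⟶ U}
    (E : Multicofork (sinkMultispan X ι)) {W : C} {i j : I} {f : W ⟶ X i} {g : W ⟶ X j}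
    (h : f ≫ ι i = g ≫ ι j) : f ≫ E.π i = g ≫ E.π j := by
  have hcond : pullback.fst (ι i) (ι j) ≫ E.π i = pullback.snd (ι i) (ι j) ≫ E.π j :=
    E.condition (i, j)
  calc f ≫ E.π i = pullback.lift f g h ≫ pullback.fst (ι i) (ι j) ≫ E.π i :=
        (pullback.lift_fst_assoc _ _ h _).symm
    _ = pullback.lift f g h ≫ pullback.snd (ι i) (ι j) ≫ E.π j := by rw [hcond]
    _ = g ≫ E.π j := pullback.lift_snd_assoc _ _ h _

end SinkMultispan

namespace P2

variable {C : Type u} [Category.{v} C] [HasPullbacks C] {I : Type w} {F : (P2 I)ᵒᵖ ⥤ C}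
  (c : Cocone F)

abbrev coconeSink (i : I) : F.obj (op (single i)) ⟶ c.pt :=
  c.ι.app (op (single i))

noncomputable abbrev coconeMultispan : MultispanIndex (MultispanShape.prod I) C :=
  sinkMultispan (fun i => F.obj (op (single i))) (coconeSink c)

theorem map_singleHom_comp_π_eq (E : Multicofork (coconeMultispan c)) (S : P2 I) {i j : I}
    (hi : i ∈ S.obj) (hj : j ∈ S.obj) :
    F.map (singleHom S hi).op ≫ E.π i = F.map (singleHom S hj).op ≫ E.π j :=
  sinkMultispan_comp_π_eq E ((c.w _).trans (c.w _).symm)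

/-- At `S`, restrict to a chosen `{i} ⊆ S` and apply `E.π i`; by `map_singleHom_comp_π_eq`
the choice of `i` does not matter. -/
noncomputable def coconeOfMulticofork (E : Multicofork (coconeMultispan c)) : Cocone F where
  pt := E.pt
  ι.app S := F.map (singleHom S.unop S.unop.elem_mem).op ≫ E.π _
  ι.naturality S T f := by
    have hf : f ≫ (singleHom T.unop T.unop.elem_mem).op
        = (singleHom S.unop (leOfHom f.unop.hom T.unop.elem_mem)).op :=
      Subsingleton.elim _ _
    refine (F.map_comp_assoc _ _ _).symm.trans ?_
    refine (congrArg (fun g => F.map g ≫ E.π T.unop.elem) hf).trans ?_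
    exact (map_singleHom_comp_π_eq c E _ _ _).trans (Category.comp_id _).symm

theorem sink_comp_desc_coconeOfMulticofork (hc : IsColimit c)
    (E : Multicofork (coconeMultispan c)) (i : I) :
    coconeSink c i ≫ hc.desc (coconeOfMulticofork c E) = E.π i := by
  have hid : singleHom (single i) (Set.mem_singleton i) = 𝟙 _ := Subsingleton.elim _ _
  rw [hc.fac]
  refine (map_singleHom_comp_π_eq c E (single i) _ (Set.mem_singleton i)).trans ?_
  rw [hid, op_id, F.map_id]
  exact Category.id_comp _

theorem eq_desc_coconeOfMulticofork (hc : IsColimit c) (E : Multicofork (coconeMultispan c))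
    (m : c.pt ⟶ E.pt) (hm : ∀ i, coconeSink c i ≫ m = E.π i) :
    m = hc.desc (coconeOfMulticofork c E) := by
  refine hc.uniq (coconeOfMulticofork c E) m fun S => ?_
  rw [← c.w (singleHom S.unop S.unop.elem_mem).op]
  exact (Category.assoc _ _ _).trans (congrArg (F.map _ ≫ ·) (hm S.unop.elem))

noncomputable def isColimitMulticofork (hc : IsColimit c) :
    IsColimit (Multicofork.ofπ (coconeMultispan c) c.pt (coconeSink c)
      fun _ => pullback.condition) :=
  Multicofork.IsColimit.mk _ (fun E => hc.desc (coconeOfMulticofork c E))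
    (sink_comp_desc_coconeOfMulticofork c hc) (eq_desc_coconeOfMulticofork c hc)

end P2

/-- If `U` is a colimit (glued-up object) of a functor `F : P₂(I)ᵒᵖ ⥤ C`
through the sink morphisms `ι_i : F({i}) ⟶ U`, then `U` is also the multicoequalizer of the
multispan formed by the pullbacks `U_i ×_U U_j` with the two pullback projections. -/
theorem multicoequalizer_of_gluedUp {C : Type u} [Category.{v} C] [HasPullbacks C]
    {I : Type w} (F : (P2 I)ᵒᵖ ⥤ C) (U : C)
    (ι : ∀ i : I, F.obj (op (P2.single i)) ⟶ U)
    (h : ∃ α : F ⟶ (Functor.const (P2 I)ᵒᵖ).obj U,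
        (∀ i : I, α.app (op (P2.single i)) = ι i) ∧
          Nonempty (IsColimit (Cocone.mk U α))) :
    Nonempty (IsColimit (Multicofork.ofπ
      (sinkMultispan (fun i => F.obj (op (P2.single i))) ι) U ι
      (fun _ => pullback.condition))) := by
  obtain ⟨α, hα, ⟨hc⟩⟩ := h
  obtain rfl : ι = fun i => α.app (op (P2.single i)) := funext fun i => (hα i).symm
  exact ⟨P2.isColimitMulticofork _ hc⟩
end

section
/- Given gluing data of sets of type I, the following are equivalent: (B) every canonical map ι_i : X_i → Q is injective, every f_{i,j} is injective, and for all i, j ∈ I the image ι_i(f_{i,j}(X_{i,j})) equals (range ι_i) ∩ (range ι_j) in Q; (C) every f_{i,j} is injective and for all i, j ∈ I the canonical map X_{i,j} → { (x,y) ∈ X_i × X_j | ι_i(x) = ι_j(y) } sending u to (f_{i,j}(u), f_{j,i}(τ_{i,j}(u))) is a bijection. -/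
/-!
Both conditions are statements about the map `u ↦ (f_{i,j} u, f_{j,i} (τ_{i,j} u))` from `X_{i,j}`
into the fibre product `X_i ×_Q X_j`: it is injective as soon as `f_{i,j}` is, and, when the `ι`
are injective, surjective exactly when `ι_i (f_{i,j} X_{i,j})` fills `range ι_i ∩ range ι_j`.
For `i = j`, where `τ_{i,i} = id`, surjectivity says that `ι_i x = ι_i y` forces `x = y`.
-/

universe u

/-- Gluing data of sets of type `I`: types `X i`, overlap types `Xp i j` with `Xp i i = X i`,
maps `f i j : Xp i j → X i` with `f i i = id`, and transition bijections
`τ i j : Xp i j → Xp j i` with `τ j i ∘ τ i j = id` and `τ i i = id`. -/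
structure SetGluingData (I : Type u) where
  /-- the sets being glued -/
  X : I → Type u
  /-- the overlap sets -/
  Xp : I → I → Type u
  /-- the inclusion of the overlaps -/
  f : ∀ i j, Xp i j → X i
  /-- the transition maps -/
  τ : ∀ i j, Xp i j → Xp j i
  diag : ∀ i, Xp i i = X i
  f_diag : ∀ i (u : Xp i i), f i i u = cast (diag i) u
  τ_invol : ∀ i j (u : Xp i j), τ j i (τ i j u) = u
  τ_diag : ∀ i (u : Xp i i), τ i i u = u

namespace SetGluingData

variable {I : Type u} (D : SetGluingData I)

/-- The gluing relation on the disjoint union `Σ_{i∈I} X_i`: `(i,x) R (j,y)` iff there is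
`u ∈ X_{i,j}` with `x = f_{i,j}(u)` and `y = f_{j,i}(τ_{i,j}(u))`. -/
def R : (Σ i, D.X i) → (Σ i, D.X i) → Prop :=
  fun p q => ∃ u : D.Xp p.1 q.1,
    p.2 = D.f p.1 q.1 u ∧ q.2 = D.f q.1 p.1 (D.τ p.1 q.1 u)

/-- The glued set: the quotient of `Σ_{i∈I} X_i` by the equivalence relation generated by
the gluing relation. -/
def Q : Type u := Quot D.R

/-- The canonical map `ι_i : X_i → Q`. -/
def ι (i : I) : D.X i → D.Q := fun x => Quot.mk D.R ⟨i, x⟩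

lemma ι_f_eq_ι_f_τ {i j : I} (u : D.Xp i j) :
    D.ι i (D.f i j u) = D.ι j (D.f j i (D.τ i j u)) :=
  Quot.sound ⟨u, rfl, rfl⟩

def toPullback (i j : I) (u : D.Xp i j) : (D.ι i).Pullback (D.ι j) :=
  ⟨(D.f i j u, D.f j i (D.τ i j u)), D.ι_f_eq_ι_f_τ u⟩

lemma toPullback_injective {i j : I} (hf : Function.Injective (D.f i j)) :
    Function.Injective (D.toPullback i j) :=
  fun _ _ h => hf (congrArg (fun p => p.1.1) h)

lemma image_ι_range_f_subset (i j : I) :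
    D.ι i '' Set.range (D.f i j) ⊆ Set.range (D.ι i) ∩ Set.range (D.ι j) := by
  rintro _ ⟨_, ⟨u, rfl⟩, rfl⟩
  exact ⟨⟨_, rfl⟩, ⟨_, (D.ι_f_eq_ι_f_τ u).symm⟩⟩

lemma range_ι_inter_subset_image_of_surjective {i j : I}
    (h : Function.Surjective (D.toPullback i j)) :
    Set.range (D.ι i) ∩ Set.range (D.ι j) ⊆ D.ι i '' Set.range (D.f i j) := by
  rintro _ ⟨⟨x, rfl⟩, ⟨y, hy⟩⟩
  obtain ⟨u, hu⟩ := h ⟨(x, y), hy.symm⟩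
  exact ⟨x, ⟨u, congrArg (fun p => p.1.1) hu⟩, rfl⟩

lemma ι_injective_of_surjective_toPullback {i : I} (h : Function.Surjective (D.toPullback i i)) :
    Function.Injective (D.ι i) := by
  intro x y hxy
  obtain ⟨u, hu⟩ := h ⟨(x, y), hxy⟩
  have hx : D.f i i u = x := congrArg (fun p => p.1.1) hu
  have hy : D.f i i (D.τ i i u) = y := congrArg (fun p => p.1.2) hu
  rw [← hx, ← hy, D.τ_diag]

lemma toPullback_surjective {i j : I} (hi : Function.Injective (D.ι i))
    (hj : Function.Injective (D.ι j))
    (h : Set.range (D.ι i) ∩ Set.range (D.ι j) ⊆ D.ι i '' Set.range (D.f i j)) :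
    Function.Surjective (D.toPullback i j) := by
  rintro ⟨⟨x, y⟩, hxy⟩
  obtain ⟨_, ⟨u, rfl⟩, hux⟩ := h ⟨⟨x, rfl⟩, ⟨y, hxy.symm⟩⟩
  have hx : D.f i j u = x := hi hux
  have hy : D.f j i (D.τ i j u) = y := hj (by rw [← D.ι_f_eq_ι_f_τ, hux, hxy])
  exact ⟨u, Subtype.ext (Prod.ext hx hy)⟩

/-- For gluing data of sets, the condition that the canonical maps `ι_i` and
the `f_{i,j}` are injective with `ι_i (f_{i,j}(X_{i,j})) = range ι_i ∩ range ι_j` is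
equivalent to the condition that the `f_{i,j}` are injective and the canonical map
`X_{i,j} → {(x,y) ∈ X_i × X_j | ι_i x = ι_j y}`, `u ↦ (f_{i,j} u, f_{j,i}(τ_{i,j} u))`, is a
bijection for all `i, j`. -/
theorem images_iff_overlaps_are_fibre_products :
    ((∀ i, Function.Injective (D.ι i)) ∧ (∀ i j, Function.Injective (D.f i j)) ∧
        ∀ i j, D.ι i '' Set.range (D.f i j) = Set.range (D.ι i) ∩ Set.range (D.ι j)) ↔
      ((∀ i j, Function.Injective (D.f i j)) ∧
        ∀ i j, Function.Bijective
          (fun u : D.Xp i j =>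
            (⟨(D.f i j u, D.f j i (D.τ i j u)), Quot.sound ⟨u, rfl, rfl⟩⟩ :
              { p : D.X i × D.X j // D.ι i p.1 = D.ι j p.2 }))) := by
  constructor
  · rintro ⟨hι, hf, himg⟩
    exact ⟨hf, fun i j => ⟨D.toPullback_injective (hf i j),
      D.toPullback_surjective (hι i) (hι j) (himg i j).ge⟩⟩
  · rintro ⟨hf, hpullback⟩
    exact ⟨fun i => D.ι_injective_of_surjective_toPullback (hpullback i i).2, hf,
      fun i j => (D.image_ι_range_f_subset i j).antisymm
        (D.range_ι_inter_subset_image_of_surjective (hpullback i j).2)⟩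

end SetGluingData
end
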